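/- Let n > 2 and m > 2 be even integers, let f : 𝔽₂ⁿ → 𝔽₂ and g : 𝔽₂^m → 𝔽₂ be bent functions, let μ ∈ {1,…,n}, ρ ∈ {1,…,m}, let f₀, f₁ be the restrictions of f at coordinate μ and g₀, g₁ the restrictions of g at coordinate ρ, and let h : 𝔽₂^{n−1} × 𝔽₂^{m−1} → 𝔽₂ be defined by h(x,y) = f₀(x) ⊕ g₀(y) ⊕ (f₀(x)⊕f₁(x))·(g₀(y)⊕g₁(y)). Then 2 ≤ deg(h) ≤ (n+m−2)/2 − 1, where deg denotes the algebraic degree. -/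

import Mathlib

/-!
Write `h = f₀ ⊗ 1 + 1 ⊗ g₀ + (f₀ + f₁) ⊗ (g₀ + g₁)`. The algebraic normal form of `f₀` (resp.
`f₀ + f₁`) consists of the coefficients of `f` at the monomials avoiding (resp. containing) `x_μ`,
so Rothaus' bound `deg f ≤ n/2` gives `deg f₀ ≤ n/2` and `deg (f₀ + f₁) ≤ n/2 - 1`, and similarly
for `g`; hence `deg h ≤ n/2 + m/2 - 2`. Rothaus' bound itself comes from the Poisson summation
formula `∑_{U ⊆ Tᶜ} W_f(1_U) = 2^(n-|T|) ∑_{U ⊆ T} (-1)^f(1_U)`: the right-hand side determines the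
parity of the coefficient of `x^T`, and the left-hand side, a sum of `2^(n-|T|)` terms `±2^(n/2)`,
forces it to be even once `|T| > n/2`.

For the lower bound, `4 W_h(α, β) = (A + B) P + (A - B) Q`, where `A, B` are the values of `W_f` at
the two lifts of `α` and `P, Q` those of `W_g` at the lifts of `β`. As `A, B = ±2^(n/2)` and
`P, Q = ±2^(m/2)`, `h` is bent in `n + m - 2 > 0` variables, so it cannot be affine.
-/

open Finset

/-- The sign `(-1)^b` for `b ∈ 𝔽₂`. -/
def chi (b : ZMod 2) : ℤ := if b = 0 then 1 else -1

/-- The Walsh transform of a Boolean function in `n` variables. -/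
def walsh {n : ℕ} (f : (Fin n → ZMod 2) → ZMod 2) (ω : Fin n → ZMod 2) : ℤ :=
  ∑ x : Fin n → ZMod 2, chi (f x + ∑ i, ω i * x i)

/-- The Walsh transform of a Boolean function given on a product `𝔽₂ⁿ × 𝔽₂^m`. -/
def walsh2 {n m : ℕ} (f : (Fin n → ZMod 2) → (Fin m → ZMod 2) → ZMod 2)
    (α : Fin n → ZMod 2) (β : Fin m → ZMod 2) : ℤ :=
  ∑ x : Fin n → ZMod 2, ∑ y : Fin m → ZMod 2,
    chi (f x y + (∑ i, α i * x i) + (∑ j, β j * y j))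

/-- A Boolean function in `n` variables is bent if its Walsh transform only
takes the values `±2^(n/2)`. -/
def IsBent (n : ℕ) (f : (Fin n → ZMod 2) → ZMod 2) : Prop :=
  ∀ a, walsh f a = 2 ^ (n / 2) ∨ walsh f a = -(2 ^ (n / 2))

/-- Bentness for a function given on a product, i.e. as a function in `n + m` variables. -/
def IsBent2 (n m : ℕ) (f : (Fin n → ZMod 2) → (Fin m → ZMod 2) → ZMod 2) : Prop :=
  ∀ α β, walsh2 f α β = 2 ^ ((n + m) / 2) ∨ walsh2 f α β = -(2 ^ ((n + m) / 2))

/-- `fd` is the dual of a bent function `f`:  `W_f(ω) = 2^(n/2) (−1)^{fd(ω)}`. -/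
def IsDual {n : ℕ} (f fd : (Fin n → ZMod 2) → ZMod 2) : Prop :=
  ∀ ω, walsh f ω = 2 ^ (n / 2) * chi (fd ω)

/-- The dual for a bent function given on a product (a function of `n + m` variables). -/
def IsDual2 {n m : ℕ} (f fd : (Fin n → ZMod 2) → (Fin m → ZMod 2) → ZMod 2) : Prop :=
  ∀ α β, walsh2 f α β = 2 ^ ((n + m) / 2) * chi (fd α β)

/-- Insert the bit `b` at position `μ`, giving a vector of length `n` from one of length `n-1`. -/
def insertAt {n : ℕ} (μ : Fin n) (b : ZMod 2) (x : Fin (n - 1) → ZMod 2) : Fin n → ZMod 2 :=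
  fun i =>
    if h : (i : ℕ) < (μ : ℕ) then x ⟨i, by have := μ.isLt; omega⟩
    else if h' : (μ : ℕ) < (i : ℕ) then x ⟨(i : ℕ) - 1, by have := i.isLt; omega⟩
    else b

/-- Hamming weight of a vector in `𝔽₂ⁿ`. -/
def wt {n : ℕ} (ω : Fin n → ZMod 2) : ℕ := (Finset.univ.filter fun i => ω i ≠ 0).card

/-- `t`-resiliency (with `t : ℤ`, so that the convention that every function is
`(-1)`-resilient holds). -/
def Resilient {n : ℕ} (t : ℤ) (f : (Fin n → ZMod 2) → ZMod 2) : Prop :=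
  ∀ ω, (wt ω : ℤ) ≤ t → walsh f ω = 0

/-- `t`-resiliency for a function given on a product `𝔽₂ⁿ × 𝔽₂^m`. -/
def Resilient2 {n m : ℕ} (t : ℤ) (f : (Fin n → ZMod 2) → (Fin m → ZMod 2) → ZMod 2) : Prop :=
  ∀ α β, (wt α + wt β : ℤ) ≤ t → walsh2 f α β = 0

/-- Coefficient of the monomial `∏_{i ∈ S} x_i` in the algebraic normal form of `f`
(Möbius inversion over the subsets of `S`). -/
def anf {n : ℕ} (f : (Fin n → ZMod 2) → ZMod 2) (S : Finset (Fin n)) : ZMod 2 :=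
  ∑ T ∈ S.powerset, f fun i => if i ∈ T then 1 else 0

/-- The algebraic degree of a Boolean function: the largest size of a monomial with
nonzero coefficient in its algebraic normal form. -/
def algDeg {n : ℕ} (f : (Fin n → ZMod 2) → ZMod 2) : ℕ :=
  ((Finset.univ : Finset (Finset (Fin n))).filter fun S => anf f S ≠ 0).sup Finset.card

/-- View a function on `𝔽₂ⁿ × 𝔽₂^m` as a Boolean function in `n + m` variables. -/
def join {n m : ℕ} (h : (Fin n → ZMod 2) → (Fin m → ZMod 2) → ZMod 2) :
    (Fin (n + m) → ZMod 2) → ZMod 2 :=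
  fun z => h (fun i => z (Fin.castAdd m i)) (fun j => z (Fin.natAdd n j))

lemma zmod2_eq_zero_or_eq_one (a : ZMod 2) : a = 0 ∨ a = 1 := by
  revert a; decide

lemma chi_zero : chi 0 = 1 := rfl

lemma chi_one : chi 1 = -1 := rfl

lemma chi_add (a b : ZMod 2) : chi (a + b) = chi a * chi b := by
  revert a b; decide

lemma chi_eq_one_or_eq_neg_one (a : ZMod 2) : chi a = 1 ∨ chi a = -1 := by
  revert a; decide

lemma chi_eq_one_sub_two_mul_val (a : ZMod 2) : chi a = 1 - 2 * a.val := by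
  revert a; decide

lemma chi_sum {ι : Type*} (s : Finset ι) (x : ι → ZMod 2) :
    chi (∑ i ∈ s, x i) = ∏ i ∈ s, chi (x i) := by
  classical
  induction s using Finset.induction_on with
  | empty => rfl
  | insert a s ha ih => rw [sum_insert ha, prod_insert ha, chi_add, ih]

lemma sum_powerset_sum_powerset {α R : Type*} [DecidableEq α] [Ring R] [CharP R 2]
    (T : Finset α) (F : Finset α → R) :
    ∑ S ∈ T.powerset, ∑ U ∈ S.powerset, F U = F T := by
  induction T using Finset.induction_on generalizing F with
  | empty => simp
  | insert a T ha ih =>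
    have hsplit : ∀ S ∈ T.powerset, ∑ U ∈ (insert a S).powerset, F U
        = ∑ U ∈ S.powerset, F U + ∑ U ∈ S.powerset, F (insert a U) := fun S hS =>
      sum_powerset_insert (fun haS => ha (mem_powerset.mp hS haS)) F
    rw [sum_powerset_insert ha, sum_congr rfl hsplit, sum_add_distrib, ih, ih,
      ← add_assoc, CharTwo.add_self_eq_zero, zero_add]

lemma sum_powerset_eq_of_card_le_one {α M : Type*} [DecidableEq α] [AddCommMonoid M]
    (T : Finset α) (F : Finset α → M) (hF : ∀ S, 2 ≤ S.card → F S = 0) :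
    ∑ S ∈ T.powerset, F S = F ∅ + ∑ i ∈ T, F {i} := by
  induction T using Finset.induction_on with
  | empty => simp
  | insert a T ha ih =>
    have hins : ∑ S ∈ T.powerset, F (insert a S) = F {a} := by
      refine (sum_eq_single ∅ (fun S hS hne => hF _ ?_) (by simp)).trans rfl
      rw [card_insert_of_notMem fun haS => ha (mem_powerset.mp hS haS)]
      have := card_pos.mpr (nonempty_iff_ne_empty.mpr hne)
      omega
    rw [sum_powerset_insert ha, ih, hins, sum_insert ha]
    abel

lemma sum_powerset_map {α β M : Type*} [AddCommMonoid M] (φ : α ↪ β) (s : Finset α)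
    (F : Finset β → M) :
    ∑ U ∈ (s.map φ).powerset, F U = ∑ U ∈ s.powerset, F (U.map φ) := by
  have hpow : (s.map φ).powerset = s.powerset.map (mapEmbedding φ).toEmbedding := by
    ext U
    simp [subset_map_iff, eq_comm]
  rw [hpow, sum_map]
  rfl

lemma sum_powerset_chi_sum {ι : Type*} (A : Finset ι) (x : ι → ZMod 2) :
    ∑ U ∈ A.powerset, chi (∑ i ∈ U, x i) = if ∀ i ∈ A, x i = 0 then 2 ^ A.card else 0 := by
  have hone_add : ∀ b : ZMod 2, 1 + chi b = if b = 0 then 2 else 0 := by decide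
  simp only [chi_sum, ← prod_one_add, hone_add, prod_ite_zero, prod_const]

lemma dvd_sum_sub_card_mul_of_eq_or_eq_neg {ι : Type*} {s : Finset ι} {a : ι → ℤ} {c : ℤ}
    (ha : ∀ i ∈ s, a i = c ∨ a i = -c) : 2 * c ∣ ∑ i ∈ s, a i - s.card * c := by
  rw [← nsmul_eq_mul, ← sum_const, ← sum_sub_distrib]
  refine dvd_sum fun i hi => ?_
  rcases ha i hi with h | h <;> rw [h]
  · simp
  · exact ⟨-1, by ring⟩

lemma add_mul_add_sub_mul_eq_or_eq_neg {a b p q s t : ℤ} (ha : a = s ∨ a = -s)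
    (hb : b = s ∨ b = -s) (hp : p = t ∨ p = -t) (hq : q = t ∨ q = -t) :
    (a + b) * p + (a - b) * q = 2 * (s * t) ∨ (a + b) * p + (a - b) * q = -(2 * (s * t)) := by
  rcases ha with rfl | rfl <;> rcases hb with rfl | rfl <;> rcases hp with rfl | rfl <;>
    rcases hq with rfl | rfl <;> first | (left; ring1) | (right; ring1)

def indVec {n : ℕ} (T : Finset (Fin n)) : Fin n → ZMod 2 := fun i => if i ∈ T then 1 else 0

section AlgebraicNormalForm

variable {n : ℕ}

lemma anf_eq_sum_powerset (f : (Fin n → ZMod 2) → ZMod 2) (S : Finset (Fin n)) :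
    anf f S = ∑ T ∈ S.powerset, f (indVec T) := rfl

lemma exists_indVec_eq (x : Fin n → ZMod 2) : ∃ T, indVec T = x := by
  refine ⟨univ.filter fun i => x i = 1, funext fun i => ?_⟩
  rcases zmod2_eq_zero_or_eq_one (x i) with h | h <;> simp [indVec, h]

lemma sum_mul_indVec (a : Fin n → ZMod 2) (T : Finset (Fin n)) :
    ∑ i, a i * indVec T i = ∑ i ∈ T, a i := by
  simp [indVec, mul_ite, sum_ite_mem]

lemma sum_powerset_indVec {M : Type*} [AddCommMonoid M] (T : Finset (Fin n))
    (F : (Fin n → ZMod 2) → M) :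
    ∑ U ∈ T.powerset, F (indVec U) = ∑ x with ∀ i ∉ T, x i = 0, F x := by
  refine sum_nbij' indVec (fun x => univ.filter (x · ≠ 0)) ?_ ?_ ?_ ?_ fun _ _ => rfl
  · intro U hU
    simp only [mem_filter, mem_univ, true_and]
    intro i hiT
    simpa [indVec] using fun hiU => hiT (mem_powerset.mp hU hiU)
  · intro x hx
    simp only [mem_filter, mem_univ, true_and] at hx
    simpa [subset_iff] using fun i => not_imp_comm.mp (hx i)
  · intro U _
    ext i
    simp [indVec]
  · intro x _
    funext i
    rcases zmod2_eq_zero_or_eq_one (x i) with h | h <;> simp [indVec, h]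

lemma sum_powerset_compl_walsh (f : (Fin n → ZMod 2) → ZMod 2) (T : Finset (Fin n)) :
    ∑ U ∈ Tᶜ.powerset, walsh f (indVec U)
      = 2 ^ (n - T.card) * ∑ U ∈ T.powerset, chi (f (indVec U)) := by
  have hwalsh : ∀ U, walsh f (indVec U) = ∑ x, chi (f x) * chi (∑ i ∈ U, x i) := fun U => by
    simp only [walsh, ← chi_add, mul_comm (indVec U _), sum_mul_indVec]
  simp only [hwalsh]
  rw [sum_comm]
  simp only [← mul_sum, sum_powerset_chi_sum, mul_ite, mul_zero, ← sum_filter, card_compl,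
    Fintype.card_fin, mem_compl]
  rw [sum_powerset_indVec (F := fun x => chi (f x)), mul_sum]
  simp only [mul_comm]

lemma card_le_algDeg {f : (Fin n → ZMod 2) → ZMod 2} {S : Finset (Fin n)} (hS : anf f S ≠ 0) :
    S.card ≤ algDeg f :=
  le_sup (f := Finset.card) (mem_filter.mpr ⟨mem_univ S, hS⟩)

lemma algDeg_le_iff {f : (Fin n → ZMod 2) → ZMod 2} {d : ℕ} :
    algDeg f ≤ d ↔ ∀ S : Finset (Fin n), anf f S ≠ 0 → S.card ≤ d := by
  simp [algDeg]

lemma sum_powerset_anf (f : (Fin n → ZMod 2) → ZMod 2) (T : Finset (Fin n)) :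
    ∑ S ∈ T.powerset, anf f S = f (indVec T) :=
  sum_powerset_sum_powerset T fun U => f (indVec U)

lemma eq_add_sum_of_algDeg_le_one {f : (Fin n → ZMod 2) → ZMod 2} (hf : algDeg f ≤ 1)
    (x : Fin n → ZMod 2) : f x = anf f ∅ + ∑ i, anf f {i} * x i := by
  obtain ⟨T, rfl⟩ := exists_indVec_eq x
  rw [← sum_powerset_anf f, sum_powerset_eq_of_card_le_one, sum_mul_indVec]
  intro S hS
  by_contra hne
  have := (card_le_algDeg hne).trans hf
  omega

lemma walsh_eq_of_algDeg_le_one {f : (Fin n → ZMod 2) → ZMod 2} (hf : algDeg f ≤ 1) :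
    walsh f (fun i => anf f {i}) = 2 ^ n * chi (anf f ∅) := by
  have hconst : ∀ x, f x + ∑ i, anf f {i} * x i = anf f ∅ := fun x => by
    rw [eq_add_sum_of_algDeg_le_one hf x, add_assoc, CharTwo.add_self_eq_zero, add_zero]
  simp [walsh, hconst, card_univ]

lemma anf_add (F G : (Fin n → ZMod 2) → ZMod 2) (S : Finset (Fin n)) :
    anf (fun x => F x + G x) S = anf F S + anf G S :=
  sum_add_distrib

lemma algDeg_add_le (F G : (Fin n → ZMod 2) → ZMod 2) :
    algDeg (fun x => F x + G x) ≤ max (algDeg F) (algDeg G) :=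
  algDeg_le_iff.mpr fun S hS => by
    rw [anf_add] at hS
    by_cases hF : anf F S = 0
    · rw [hF, zero_add] at hS
      exact (card_le_algDeg hS).trans (le_max_right _ _)
    · exact (card_le_algDeg hF).trans (le_max_left _ _)

lemma algDeg_const (c : ZMod 2) : algDeg (fun _ : Fin n → ZMod 2 => c) = 0 :=
  Nat.le_zero.mp <| algDeg_le_iff.mpr fun S hS => by
    rw [anf_eq_sum_powerset, sum_const, card_powerset, nsmul_eq_mul, Nat.cast_pow,
      Nat.cast_ofNat] at hS
    by_contra hpos
    exact hS (by rw [show (2 : ZMod 2) = 0 from rfl, zero_pow (by omega), zero_mul])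

end AlgebraicNormalForm

section Bent

variable {n : ℕ} {f : (Fin n → ZMod 2) → ZMod 2}

lemma IsBent.anf_eq_zero_of_half_lt_card (hf : IsBent n f) (hn : Even n) (hn4 : 4 ≤ n)
    {T : Finset (Fin n)} (hT : n / 2 < T.card) :
    anf f T = 0 := by
  set e := n - T.card
  have ht : T.card ≤ n := by simpa using card_le_univ T
  set N := ∑ U ∈ T.powerset, (f (indVec U)).val
  have hanf : anf f T = (N : ZMod 2) := by
    simp [N, anf_eq_sum_powerset, Nat.cast_sum]
  have hchi : ∑ U ∈ T.powerset, chi (f (indVec U)) = 2 ^ T.card - 2 * N := by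
    simp [N, chi_eq_one_sub_two_mul_val, sum_sub_distrib, mul_sum, card_powerset]
  have hsigns := dvd_sum_sub_card_mul_of_eq_or_eq_neg (s := Tᶜ.powerset)
    (fun V _ => hf (indVec V))
  rw [sum_powerset_compl_walsh, hchi, card_powerset, card_compl, Fintype.card_fin] at hsigns
  push_cast at hsigns
  -- All three terms are multiples of `2 ^ (e + 2)`, the last one by `hsigns` as `e < n / 2`.
  have hN : (2 : ℤ) ^ (e + 1) * N = 2 ^ n - 2 ^ (e + n / 2)
      - (2 ^ e * (2 ^ T.card - 2 * N) - 2 ^ e * 2 ^ (n / 2)) := by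
    have h2n : (2 : ℤ) ^ n = 2 ^ e * 2 ^ T.card := by
      rw [← pow_add, Nat.sub_add_cancel ht]
    rw [h2n, pow_add, pow_succ]
    ring
  have hdvd : (2 : ℤ) ^ (e + 1) * 2 ∣ 2 ^ (e + 1) * N := by
    rw [← pow_succ, hN]
    refine dvd_sub (dvd_sub (pow_dvd_pow 2 (by omega)) (pow_dvd_pow 2 (by omega))) ?_
    refine dvd_trans ?_ hsigns
    rw [← pow_succ']
    exact pow_dvd_pow 2 (by obtain ⟨r, hr⟩ := hn; omega)
  rw [hanf, ZMod.natCast_eq_zero_iff]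
  exact_mod_cast (mul_dvd_mul_iff_left (by positivity)).mp hdvd

lemma IsBent.algDeg_le_half (hf : IsBent n f) (hn : Even n) (hn4 : 4 ≤ n) : algDeg f ≤ n / 2 :=
  algDeg_le_iff.mpr fun _ hS => not_lt.mp fun hT => hS (hf.anf_eq_zero_of_half_lt_card hn hn4 hT)

lemma IsBent.two_le_algDeg (hf : IsBent n f) (hn : 0 < n) : 2 ≤ algDeg f := by
  by_contra! hdeg
  have hW := walsh_eq_of_algDeg_le_one (Nat.le_of_lt_succ hdeg)
  have hlt : (2 : ℤ) ^ (n / 2) < 2 ^ n :=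
    pow_lt_pow_right₀ one_lt_two (Nat.div_lt_self hn one_lt_two)
  have hpos : (0 : ℤ) < 2 ^ (n / 2) := by positivity
  rcases hf (fun i => anf f {i}) with h | h <;> rw [hW] at h <;>
    rcases chi_eq_one_or_eq_neg_one (anf f ∅) with hc | hc <;> rw [hc] at h <;> linarith

end Bent

lemma insertAt_eq_insertNth {k : ℕ} (μ : Fin (k + 1)) (b : ZMod 2) (x : Fin k → ZMod 2) :
    insertAt μ b x = Fin.insertNth μ b x := by
  funext i
  refine Fin.succAboveCases μ ?_ (fun j => ?_) i
  · simp [insertAt]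
  · rw [Fin.insertNth_apply_succAbove]
    unfold insertAt
    rcases lt_or_ge (Fin.castSucc j) μ with h | h
    · rw [Fin.succAbove_of_castSucc_lt _ _ h]
      simp only [Fin.lt_def, Fin.val_castSucc] at h ⊢
      rw [dif_pos h]
      rfl
    · rw [Fin.succAbove_of_le_castSucc _ _ h]
      simp only [Fin.le_def, Fin.val_castSucc, Fin.val_succ] at h ⊢
      rw [dif_neg (by omega), dif_pos (by omega)]
      simp

section Restriction

variable {k : ℕ} (f : (Fin (k + 1) → ZMod 2) → ZMod 2) (μ : Fin (k + 1))

lemma walsh_insertNth (c : ZMod 2) (α : Fin k → ZMod 2) :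
    walsh f (μ.insertNth c α) = walsh (fun x => f (μ.insertNth 0 x)) α
      + chi c * walsh (fun x => f (μ.insertNth 1 x)) α := by
  have hdot : ∀ (b : ZMod 2) (x : Fin k → ZMod 2),
      ∑ i, (μ.insertNth c α : Fin (k + 1) → ZMod 2) i * (μ.insertNth b x : Fin (k + 1) → ZMod 2) i
        = c * b + ∑ i, α i * x i := fun b x => by
    simp [Fin.sum_univ_succAbove _ μ]
  simp only [walsh]
  rw [← (Fin.insertNthEquiv (fun _ => ZMod 2) μ).sum_comp, Fintype.sum_prod_type,
    show (univ : Finset (ZMod 2)) = {0, 1} from rfl, sum_pair zero_ne_one]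
  simp only [Fin.insertNthEquiv_apply, hdot, mul_zero, zero_add, mul_one, add_left_comm _ c,
    chi_add c, mul_sum]
  rfl

lemma insertNth_zero_indVec (U : Finset (Fin k)) :
    μ.insertNth 0 (indVec U) = indVec (U.map μ.succAboveEmb) := by
  funext i
  refine Fin.succAboveCases μ ?_ (fun j => ?_) i <;> simp [indVec]

lemma insertNth_one_indVec (U : Finset (Fin k)) :
    μ.insertNth 1 (indVec U) = indVec (insert μ (U.map μ.succAboveEmb)) := by
  funext i
  refine Fin.succAboveCases μ ?_ (fun j => ?_) i <;> simp [indVec]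

lemma anf_insertNth_zero (L : Finset (Fin k)) :
    anf (fun x => f (μ.insertNth 0 x)) L = anf f (L.map μ.succAboveEmb) := by
  simp only [anf_eq_sum_powerset, sum_powerset_map, insertNth_zero_indVec]

lemma anf_insertNth_zero_add_one (L : Finset (Fin k)) :
    anf (fun x => f (μ.insertNth 0 x) + f (μ.insertNth 1 x)) L
      = anf f (insert μ (L.map μ.succAboveEmb)) := by
  have hμ : μ ∉ L.map μ.succAboveEmb := by simp
  simp only [anf_eq_sum_powerset, sum_powerset_insert hμ, sum_powerset_map, sum_add_distrib,
    insertNth_zero_indVec, insertNth_one_indVec]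

lemma algDeg_insertNth_zero_le : algDeg (fun x => f (μ.insertNth 0 x)) ≤ algDeg f :=
  algDeg_le_iff.mpr fun L hL => by
    rw [anf_insertNth_zero] at hL
    simpa using card_le_algDeg hL

lemma algDeg_insertNth_zero_add_one_le :
    algDeg (fun x => f (μ.insertNth 0 x) + f (μ.insertNth 1 x)) ≤ algDeg f - 1 :=
  algDeg_le_iff.mpr fun L hL => by
    rw [anf_insertNth_zero_add_one] at hL
    have := card_le_algDeg hL
    rw [card_insert_of_notMem (by simp), card_map] at this
    omega

end Restriction

section Join

variable {n m : ℕ}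

def finsetSplit : Finset (Fin (n + m)) ≃ Finset (Fin n) × Finset (Fin m) :=
  finSumFinEquiv.symm.finsetCongr.trans Finset.sumEquiv.toEquiv

@[simp] lemma mem_finsetSplit_fst {S : Finset (Fin (n + m))} {i : Fin n} :
    i ∈ (finsetSplit S).1 ↔ Fin.castAdd m i ∈ S := by
  simp [finsetSplit]

@[simp] lemma mem_finsetSplit_snd {S : Finset (Fin (n + m))} {j : Fin m} :
    j ∈ (finsetSplit S).2 ↔ Fin.natAdd n j ∈ S := by
  simp [finsetSplit]

lemma subset_iff_finsetSplit {U S : Finset (Fin (n + m))} :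
    U ⊆ S ↔ (finsetSplit U).1 ⊆ (finsetSplit S).1 ∧ (finsetSplit U).2 ⊆ (finsetSplit S).2 := by
  simp only [subset_iff, mem_finsetSplit_fst, mem_finsetSplit_snd]
  exact Fin.forall_fin_add _

lemma card_finsetSplit (S : Finset (Fin (n + m))) :
    S.card = (finsetSplit S).1.card + (finsetSplit S).2.card := by
  simp [finsetSplit, card_toLeft_add_card_toRight]

lemma join_indVec (H : (Fin n → ZMod 2) → (Fin m → ZMod 2) → ZMod 2) (U : Finset (Fin (n + m))) :
    join H (indVec U) = H (indVec (finsetSplit U).1) (indVec (finsetSplit U).2) := by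
  simp only [join]
  congr 1 <;> funext i <;> simp [indVec]

lemma anf_join_mul (F : (Fin n → ZMod 2) → ZMod 2) (G : (Fin m → ZMod 2) → ZMod 2)
    (S : Finset (Fin (n + m))) :
    anf (join fun x y => F x * G y) S = anf F (finsetSplit S).1 * anf G (finsetSplit S).2 := by
  simp only [anf_eq_sum_powerset, sum_mul_sum, ← sum_product']
  refine sum_equiv finsetSplit (fun U => ?_) (fun U _ => join_indVec _ U)
  simp [subset_iff_finsetSplit]

lemma algDeg_join_mul_le (F : (Fin n → ZMod 2) → ZMod 2) (G : (Fin m → ZMod 2) → ZMod 2) :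
    algDeg (join fun x y => F x * G y) ≤ algDeg F + algDeg G :=
  algDeg_le_iff.mpr fun S hS => by
    rw [anf_join_mul] at hS
    rw [card_finsetSplit]
    exact add_le_add (card_le_algDeg (left_ne_zero_of_mul hS))
      (card_le_algDeg (right_ne_zero_of_mul hS))

lemma walsh_join (H : (Fin n → ZMod 2) → (Fin m → ZMod 2) → ZMod 2)
    (ω : Fin (n + m) → ZMod 2) :
    walsh (join H) ω = walsh2 H (fun i => ω (Fin.castAdd m i)) (fun j => ω (Fin.natAdd n j)) := by
  simp only [walsh, walsh2]
  rw [← (Fin.appendEquiv n m).sum_comp, Fintype.sum_prod_type]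
  simp [join, Fin.sum_univ_add, add_assoc]

lemma IsBent2.isBent_join {H : (Fin n → ZMod 2) → (Fin m → ZMod 2) → ZMod 2}
    (hH : IsBent2 n m H) : IsBent (n + m) (join H) := fun ω => by
  rw [walsh_join]
  exact hH _ _

lemma walsh2_add (F : (Fin n → ZMod 2) → ZMod 2) (G : (Fin m → ZMod 2) → ZMod 2)
    (α : Fin n → ZMod 2) (β : Fin m → ZMod 2) :
    walsh2 (fun x y => F x + G y) α β = walsh F α * walsh G β := by
  simp only [walsh2, walsh, sum_mul_sum, ← chi_add]
  congr! 3
  ring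

end Join

def indirectSum {k l : ℕ} (f0 f1 : (Fin k → ZMod 2) → ZMod 2) (g0 g1 : (Fin l → ZMod 2) → ZMod 2)
    (x : Fin k → ZMod 2) (y : Fin l → ZMod 2) : ZMod 2 :=
  f0 x + g0 y + (f0 x + f1 x) * (g0 y + g1 y)

section IndirectSum

variable {k l : ℕ}

lemma two_mul_chi_indirectSum (a0 a1 b0 b1 c d : ZMod 2) :
    2 * chi (a0 + b0 + (a0 + a1) * (b0 + b1) + c + d)
      = chi (a0 + b0 + c + d) + chi (a0 + b1 + c + d) + chi (a1 + b0 + c + d)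
        - chi (a1 + b1 + c + d) := by
  revert a0 a1 b0 b1 c d; decide

lemma two_mul_walsh2_indirectSum (f0 f1 : (Fin k → ZMod 2) → ZMod 2)
    (g0 g1 : (Fin l → ZMod 2) → ZMod 2) (α : Fin k → ZMod 2) (β : Fin l → ZMod 2) :
    2 * walsh2 (indirectSum f0 f1 g0 g1) α β
      = walsh f0 α * walsh g0 β + walsh f0 α * walsh g1 β + walsh f1 α * walsh g0 β
        - walsh f1 α * walsh g1 β := by
  simp only [← walsh2_add, walsh2, mul_sum, ← sum_add_distrib, ← sum_sub_distrib, indirectSum,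
    two_mul_chi_indirectSum]

lemma isBent2_indirectSum {f : (Fin (k + 1) → ZMod 2) → ZMod 2}
    {g : (Fin (l + 1) → ZMod 2) → ZMod 2} (hf : IsBent (k + 1) f) (hg : IsBent (l + 1) g)
    (hk : Even (k + 1)) (hl : Even (l + 1)) (μ : Fin (k + 1)) (ρ : Fin (l + 1)) :
    IsBent2 k l (indirectSum (fun x => f (μ.insertNth 0 x)) (fun x => f (μ.insertNth 1 x))
      (fun y => g (ρ.insertNth 0 y)) (fun y => g (ρ.insertNth 1 y))) := fun α β => by
  have h2 := two_mul_walsh2_indirectSum (fun x => f (μ.insertNth 0 x))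
    (fun x => f (μ.insertNth 1 x)) (fun y => g (ρ.insertNth 0 y)) (fun y => g (ρ.insertNth 1 y)) α β
  have hpow : (2 : ℤ) * (2 ^ ((k + 1) / 2) * 2 ^ ((l + 1) / 2)) = 4 * 2 ^ ((k + l) / 2) := by
    rw [← pow_add, ← pow_succ', show (4 : ℤ) = 2 ^ 2 by norm_num, ← pow_add]
    obtain ⟨r, hr⟩ := hk
    obtain ⟨s, hs⟩ := hl
    congr 1
    omega
  rcases add_mul_add_sub_mul_eq_or_eq_neg (hf (μ.insertNth 0 α)) (hf (μ.insertNth 1 α))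
      (hg (ρ.insertNth 0 β)) (hg (ρ.insertNth 1 β)) with h | h <;>
    simp only [walsh_insertNth, chi_zero, chi_one, hpow] at h
  · left; linarith
  · right; linarith

lemma algDeg_join_indirectSum_le (f0 f1 : (Fin k → ZMod 2) → ZMod 2)
    (g0 g1 : (Fin l → ZMod 2) → ZMod 2) :
    algDeg (join (indirectSum f0 f1 g0 g1)) ≤ max (max (algDeg f0) (algDeg g0))
      (algDeg (fun x => f0 x + f1 x) + algDeg (fun y => g0 y + g1 y)) := by
  have hsplit : join (indirectSum f0 f1 g0 g1) = fun z =>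
      join (fun x y => f0 x * 1) z + join (fun x y => 1 * g0 y) z
        + join (fun x y => (f0 x + f1 x) * (g0 y + g1 y)) z := by
    funext z
    simp [join, indirectSum]
  have hconst := algDeg_const (n := k) 1
  have hconst' := algDeg_const (n := l) 1
  rw [hsplit]
  refine (algDeg_add_le _ _).trans (max_le_max ((algDeg_add_le _ _).trans (max_le_max ?_ ?_))
    (algDeg_join_mul_le _ _))
  · exact (algDeg_join_mul_le f0 fun _ => 1).trans (by rw [hconst', add_zero])
  · exact (algDeg_join_mul_le (fun _ => 1) g0).trans (by rw [hconst, zero_add])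

end IndirectSum

/-- the algebraic degree of the modified indirect sum of two bent functions
(in `n > 2` and `m > 2` variables) satisfies `2 ≤ deg h ≤ (n+m-2)/2 - 1`. -/
theorem degree_of_restriction_indirect_sum (n m : ℕ)
    (hn2 : 2 < n) (hm2 : 2 < m) (hn : Even n) (hm : Even m)
    (f : (Fin n → ZMod 2) → ZMod 2) (g : (Fin m → ZMod 2) → ZMod 2)
    (hf : IsBent n f) (hg : IsBent m g) (μ : Fin n) (ρ : Fin m)
    (f0 f1 : (Fin (n - 1) → ZMod 2) → ZMod 2)
    (g0 g1 : (Fin (m - 1) → ZMod 2) → ZMod 2)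
    (hf0 : ∀ x, f0 x = f (insertAt μ 0 x)) (hf1 : ∀ x, f1 x = f (insertAt μ 1 x))
    (hg0 : ∀ y, g0 y = g (insertAt ρ 0 y)) (hg1 : ∀ y, g1 y = g (insertAt ρ 1 y))
    (h : (Fin (n - 1) → ZMod 2) → (Fin (m - 1) → ZMod 2) → ZMod 2)
    (hh : ∀ x y, h x y = f0 x + g0 y + (f0 x + f1 x) * (g0 y + g1 y)) :
    2 ≤ algDeg (join h) ∧ algDeg (join h) ≤ (n + m - 2) / 2 - 1 := by
  obtain ⟨k, rfl⟩ : ∃ k, n = k + 1 := ⟨n - 1, by omega⟩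
  obtain ⟨l, rfl⟩ : ∃ l, m = l + 1 := ⟨m - 1, by omega⟩
  obtain rfl : f0 = fun x => f (μ.insertNth 0 x) := funext fun x => by
    rw [hf0, insertAt_eq_insertNth]
  obtain rfl : f1 = fun x => f (μ.insertNth 1 x) := funext fun x => by
    rw [hf1, insertAt_eq_insertNth]
  obtain rfl : g0 = fun y => g (ρ.insertNth 0 y) := funext fun y => by
    rw [hg0, insertAt_eq_insertNth]
  obtain rfl : g1 = fun y => g (ρ.insertNth 1 y) := funext fun y => by
    rw [hg1, insertAt_eq_insertNth]
  obtain rfl : h = indirectSum _ _ _ _ := funext fun x => funext (hh x)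
  obtain ⟨r, hr⟩ := id hn
  obtain ⟨s, hs⟩ := id hm
  refine ⟨(isBent2_indirectSum hf hg hn hm μ ρ).isBent_join.two_le_algDeg (by omega), ?_⟩
  have hdeg := algDeg_join_indirectSum_le (fun x => f (μ.insertNth 0 x))
    (fun x => f (μ.insertNth 1 x)) (fun y => g (ρ.insertNth 0 y)) (fun y => g (ρ.insertNth 1 y))
  have hf' := hf.algDeg_le_half hn (by omega)
  have hg' := hg.algDeg_le_half hm (by omega)
  have := algDeg_insertNth_zero_le f μ
  have := algDeg_insertNth_zero_add_one_le f μ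
  have := algDeg_insertNth_zero_le g ρ
  have := algDeg_insertNth_zero_add_one_le g ρ
  omega
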